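/- arXiv:2004.03383 — 5 statements merged into one kernel-verified Lean document; each statement's English description precedes it below -/
import Mathlib

section
/- Affine Scale Invariance of path methods: fix a coordinate j, real numbers c ≠ 0 and d, and let S : ℝⁿ → ℝⁿ be the map replacing the j-th coordinate x_j by (x_j − d)/c and leaving all other coordinates unchanged. If f₁, f₂ : ℝⁿ → ℝ are continuously differentiable with f₁ = f₂ ∘ S, then for every continuously differentiable path γ : [0,1] → ℝⁿ, the path-method attributions satisfy A_j(f₁, γ) = A_j(f₂, S ∘ γ). -/
/-! The rescaling `S` is affine with linear part dividing the `j`-th coordinate by `c`, so the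
chain rule gives `∂ⱼ f₁ (x) = c⁻¹ · ∂ⱼ f₂ (S x)`, while the `j`-th coordinate of `S ∘ γ` has
derivative `γⱼ' / c`: the two integrands agree pointwise. -/

open MeasureTheory

/-- The path-method attribution to coordinate `i` of function `F` along path `γ`:
`A_i(F, γ) = ∫₀¹ ∂F/∂x_i(γ(α)) · γ_i'(α) dα`. -/
noncomputable def pathAttr (n : ℕ) (F : (Fin n → ℝ) → ℝ) (γ : ℝ → (Fin n → ℝ))
    (i : Fin n) : ℝ :=
  ∫ α in (0:ℝ)..1, fderiv ℝ F (γ α) (Pi.single i 1) * deriv (fun s => γ s i) α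

/-- The affine rescaling map on coordinate `j`: it replaces `x j` by `(x j - d) / c`
and leaves all other coordinates unchanged. -/
noncomputable def affineRescale (n : ℕ) (j : Fin n) (c d : ℝ)
    (x : Fin n → ℝ) : Fin n → ℝ :=
  Function.update x j ((x j - d) / c)

section CoordDiv

variable {ι : Type*} [DecidableEq ι]

noncomputable def coordDiv (j : ι) (c : ℝ) : (ι → ℝ) →L[ℝ] (ι → ℝ) :=
  ContinuousLinearMap.pi <|
    Function.update (fun i => ContinuousLinearMap.proj i) j (c⁻¹ • ContinuousLinearMap.proj j)

theorem coordDiv_apply (j : ι) (c : ℝ) (v : ι → ℝ) :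
    coordDiv j c v = Function.update v j (v j / c) := by
  ext i
  rcases eq_or_ne i j with rfl | hij
  · simp [coordDiv, div_eq_inv_mul]
  · simp [coordDiv, hij]

theorem coordDiv_single (j : ι) (c : ℝ) :
    coordDiv j c (Pi.single j 1) = c⁻¹ • Pi.single j 1 := by
  rw [coordDiv_apply, ← Pi.single_smul']
  simp [Pi.single, Function.update_idem]

end CoordDiv

theorem affineRescale_eq_coordDiv (n : ℕ) (j : Fin n) (c d : ℝ) (x : Fin n → ℝ) :
    affineRescale n j c d x = coordDiv j c (x - Pi.single j d) := by
  ext i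
  rcases eq_or_ne i j with rfl | hij
  · simp [affineRescale, coordDiv_apply]
  · simp [affineRescale, coordDiv_apply, hij]

theorem hasFDerivAt_affineRescale (n : ℕ) (j : Fin n) (c d : ℝ) (x : Fin n → ℝ) :
    HasFDerivAt (affineRescale n j c d) (coordDiv j c) x := by
  rw [funext (affineRescale_eq_coordDiv n j c d)]
  exact (coordDiv j c).hasFDerivAt.comp x ((hasFDerivAt_id x).sub_const _)

theorem fderiv_comp_affineRescale_single {n : ℕ} {j : Fin n} {c d : ℝ}
    {f : (Fin n → ℝ) → ℝ} {x : Fin n → ℝ} (hf : DifferentiableAt ℝ f (affineRescale n j c d x)) :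
    fderiv ℝ (fun y => f (affineRescale n j c d y)) x (Pi.single j 1) =
      c⁻¹ * fderiv ℝ f (affineRescale n j c d x) (Pi.single j 1) := by
  have hchain : HasFDerivAt (fun y => f (affineRescale n j c d y))
      ((fderiv ℝ f (affineRescale n j c d x)).comp (coordDiv j c)) x :=
    hf.hasFDerivAt.comp x (hasFDerivAt_affineRescale n j c d x)
  rw [hchain.fderiv, ContinuousLinearMap.comp_apply, coordDiv_single, map_smul, smul_eq_mul]

theorem deriv_affineRescale_apply_self {n : ℕ} (j : Fin n) (c d : ℝ) (γ : ℝ → Fin n → ℝ)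
    (α : ℝ) :
    deriv (fun s => affineRescale n j c d (γ s) j) α = deriv (fun s => γ s j) α / c := by
  simp only [affineRescale, Function.update_self]
  rw [deriv_div_const, deriv_sub_const]

theorem pathAttr_comp_affineRescale {n : ℕ} (j : Fin n) (c d : ℝ) {f : (Fin n → ℝ) → ℝ}
    (hf : Differentiable ℝ f) (γ : ℝ → Fin n → ℝ) :
    pathAttr n (fun x => f (affineRescale n j c d x)) γ j =
      pathAttr n f (fun α => affineRescale n j c d (γ α)) j := by
  refine intervalIntegral.integral_congr fun α _ => ?_
  simp only [fderiv_comp_affineRescale_single (hf _), deriv_affineRescale_apply_self]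
  ring

theorem path_methods_affine_scale_invariance_general (n : ℕ) (j : Fin n) (c d : ℝ)
    (f₁ f₂ : (Fin n → ℝ) → ℝ)
    (hf₂ : ContDiff ℝ 1 f₂)
    (hcomp : ∀ x : Fin n → ℝ, f₁ x = f₂ (affineRescale n j c d x))
    (γ : ℝ → (Fin n → ℝ)) :
    pathAttr n f₁ γ j = pathAttr n f₂ (fun α => affineRescale n j c d (γ α)) j := by
  obtain rfl : f₁ = fun x => f₂ (affineRescale n j c d x) := funext hcomp
  exact pathAttr_comp_affineRescale j c d (hf₂.differentiable one_ne_zero) γ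

/-- Affine Scale Invariance of path methods: if `f₁ = f₂ ∘ S` where `S` rescales
coordinate `j` affinely, then `A_j(f₁, γ) = A_j(f₂, S ∘ γ)`. -/
theorem path_methods_affine_scale_invariance (n : ℕ) (j : Fin n) (c d : ℝ)
    (hc : c ≠ 0) (f₁ f₂ : (Fin n → ℝ) → ℝ)
    (hf₁ : ContDiff ℝ 1 f₁) (hf₂ : ContDiff ℝ 1 f₂)
    (hcomp : ∀ x : Fin n → ℝ, f₁ x = f₂ (affineRescale n j c d x))
    (γ : ℝ → (Fin n → ℝ)) (hγ : ContDiff ℝ 1 γ) :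
    pathAttr n f₁ γ j = pathAttr n f₂ (fun α => affineRescale n j c d (γ α)) j :=
  path_methods_affine_scale_invariance_general n j c d f₁ f₂ hf₂ hcomp γ
end

section
/- Symmetry preservation of Integrated Gradients: let F : ℝⁿ → ℝ be continuously differentiable and symmetric in coordinates i and j, i.e. F(x) = F(x with coordinates i and j swapped) for all x. If z, z' ∈ ℝⁿ satisfy z_i = z_j and z'_i = z'_j, then the Integrated Gradients attributions along the straight-line path γ(α) = z' + α·(z − z') satisfy A_i(F, γ) = A_j(F, γ). -/
/-!
A function invariant under the coordinate swap `σ = (i j)` has, at every point fixed by `σ`,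
a differential satisfying `dF_x ∘ σ = dF_x` by the chain rule, so its partial derivatives in
directions `i` and `j` agree there.
The straight line between two `σ`-fixed points stays in the fixed subspace, and its `i`-th and
`j`-th coordinates are the same function, so the two attribution integrands coincide.
-/

open MeasureTheory Function

theorem fderiv_apply_map_eq_of_comp_eq {𝕜 E G : Type*} [NontriviallyNormedField 𝕜]
    [NormedAddCommGroup E] [NormedSpace 𝕜 E] [NormedAddCommGroup G] [NormedSpace 𝕜 G]
    (e : E ≃L[𝕜] E) {f : E → G} (hf : f ∘ e = f) {x : E} (hx : e x = x) (v : E) :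
    fderiv 𝕜 f x (e v) = fderiv 𝕜 f x v := by
  conv_rhs => rw [← hf, e.comp_right_fderiv, hx]
  rfl

theorem comp_swap_eq_self {ι β : Type*} [DecidableEq ι] {x : ι → β} {i j : ι}
    (h : x i = x j) : x ∘ Equiv.swap i j = x := by
  rw [Equiv.comp_swap_eq_update, h, update_eq_self, ← h, update_eq_self]

theorem fderiv_single_eq_of_comp_swap {𝕜 ι G : Type*} [NontriviallyNormedField 𝕜]
    [CompleteSpace 𝕜] [Fintype ι] [DecidableEq ι] [NormedAddCommGroup G] [NormedSpace 𝕜 G]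
    {f : (ι → 𝕜) → G} {i j : ι} (hf : ∀ x, f x = f (x ∘ Equiv.swap i j))
    {x : ι → 𝕜} (hx : x i = x j) (c : 𝕜) :
    fderiv 𝕜 f x (Pi.single i c) = fderiv 𝕜 f x (Pi.single j c) := by
  let σ : (ι → 𝕜) ≃L[𝕜] (ι → 𝕜) :=
    (LinearEquiv.funCongrLeft 𝕜 𝕜 (Equiv.swap i j)).toContinuousLinearEquiv
  have hσ : ∀ y, σ y = y ∘ Equiv.swap i j := fun _ => rfl
  have hσ_single : σ (Pi.single i c) = Pi.single j c := by
    rw [hσ, Pi.single_comp_equiv, Equiv.symm_swap, Equiv.swap_apply_left]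
  rw [← hσ_single]
  exact (fderiv_apply_map_eq_of_comp_eq σ (funext fun y => (hf y).symm)
    ((hσ x).trans (comp_swap_eq_self hx)) _).symm

theorem pathAttr_eq_of_comp_swap {n : ℕ} {F : (Fin n → ℝ) → ℝ} {γ : ℝ → Fin n → ℝ}
    {i j : Fin n} (hF : ∀ x, F x = F (x ∘ Equiv.swap i j)) (hγ : ∀ α, γ α i = γ α j) :
    pathAttr n F γ i = pathAttr n F γ j := by
  have hγ_coord : (fun s => γ s i) = fun s => γ s j := funext hγ
  unfold pathAttr
  rw [hγ_coord]
  congr 1 with α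
  rw [fderiv_single_eq_of_comp_swap hF (hγ α)]

theorem integrated_gradients_symmetry_general (n : ℕ) (F : (Fin n → ℝ) → ℝ) (i j : Fin n)
    (z z' : Fin n → ℝ)
    (hsym : ∀ x : Fin n → ℝ, F x = F (x ∘ Equiv.swap i j))
    (hz : z i = z j) (hz' : z' i = z' j) :
    pathAttr n F (fun α => z' + α • (z - z')) i
      = pathAttr n F (fun α => z' + α • (z - z')) j :=
  pathAttr_eq_of_comp_swap hsym fun α => by simp [hz, hz']

/-- Symmetry preservation of Integrated Gradients: if `F` is symmetric in
coordinates `i` and `j`, and both the input `z` and the baseline `z'` agree on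
coordinates `i` and `j`, then Integrated Gradients (the path method for the
straight-line path `γ(α) = z' + α • (z - z')`) gives equal attributions to `i`
and `j`. -/
theorem integrated_gradients_symmetry (n : ℕ) (F : (Fin n → ℝ) → ℝ) (i j : Fin n)
    (z z' : Fin n → ℝ) (hF : ContDiff ℝ 1 F)
    (hsym : ∀ x : Fin n → ℝ, F x = F (x ∘ Equiv.swap i j))
    (hz : z i = z j) (hz' : z' i = z' j) :
    pathAttr n F (fun α => z' + α • (z - z')) i
      = pathAttr n F (fun α => z' + α • (z - z')) j :=
  integrated_gradients_symmetry_general n F i j z z' hsym hz hz'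
end

section
/- The Gaussian scale space solves the diffusion equation: if z : ℝⁿ → ℝ is bounded and continuous, then the function u(t, x) = (G_t ⋆ z)(x) satisfies, for every t > 0 and x ∈ ℝⁿ, the heat equation ∂u/∂t(t, x) = (1/4)·Δ_x u(t, x), where Δ_x denotes the Laplacian in the spatial variables. -/
open MeasureTheory Real

/-!
Differentiating under the integral sign moves both derivatives onto the kernel:
`∂ₜ (G_t ⋆ z) = (∂ₜ G_t) ⋆ z` and `Δ (G_t ⋆ z) = (Δ G_t) ⋆ z`, while the kernel itself satisfies
`∂ₜ G_t = ¼ Δ G_t` by direct computation. Both interchanges are justified by dominated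
convergence: `z` is bounded, and the kernel together with its derivatives up to order two is
bounded by Gaussians `C e^{-c‖w‖²}`, locally uniformly in `x` and in `t`; a Gaussian centred at
a moving point `x` near `x₀` is in turn bounded by a fixed, wider Gaussian centred at `x₀`.
-/

/-- The Gaussian kernel at scale `t` on `ℝⁿ`: `G_t(x) = (π t)^(−n/2) · exp(−‖x‖²/t)`. -/
noncomputable def gaussKernel (n : ℕ) (t : ℝ) (x : EuclideanSpace ℝ (Fin n)) : ℝ :=
  (Real.pi * t) ^ (-(n : ℝ) / 2) * Real.exp (-‖x‖ ^ 2 / t)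

/-- Gaussian blur of `z` at scale `t`: `(G_t ⋆ z)(x) = ∫ G_t(x − y) z(y) dy`. -/
noncomputable def gaussBlur (n : ℕ) (t : ℝ) (z : EuclideanSpace ℝ (Fin n) → ℝ)
    (x : EuclideanSpace ℝ (Fin n)) : ℝ :=
  ∫ y, gaussKernel n t (x - y) * z y

/-- The Laplacian of `f : ℝⁿ → ℝ` at `x`: the sum of second partial derivatives. -/
noncomputable def laplacian (n : ℕ) (f : EuclideanSpace ℝ (Fin n) → ℝ)
    (x : EuclideanSpace ℝ (Fin n)) : ℝ :=
  ∑ i : Fin n, fderiv ℝ (fun y => fderiv ℝ f y (EuclideanSpace.single i 1)) x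
      (EuclideanSpace.single i 1)

section GaussianDecay

variable {E F G : Type*} [NormedAddCommGroup E] [NormedAddCommGroup F] [NormedAddCommGroup G]

def HasGaussianDecay (f : E → F) : Prop :=
  ∃ C c : ℝ, 0 < c ∧ ∀ w, ‖f w‖ ≤ C * exp (-c * ‖w‖ ^ 2)

lemma sq_mul_exp_neg_le {c : ℝ} (hc : 0 < c) (r : ℝ) :
    r ^ 2 * exp (-c * r ^ 2) ≤ 2 / c * exp (-(c / 2) * r ^ 2) := by
  have hr : r ^ 2 ≤ 2 / c * exp (c / 2 * r ^ 2) := by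
    have := add_one_le_exp (c / 2 * r ^ 2)
    rw [div_mul_eq_mul_div, le_div_iff₀ hc]
    nlinarith
  calc r ^ 2 * exp (-c * r ^ 2)
      ≤ 2 / c * exp (c / 2 * r ^ 2) * exp (-c * r ^ 2) := by gcongr
    _ = 2 / c * exp (-(c / 2) * r ^ 2) := by rw [mul_assoc, ← exp_add]; ring_nf

lemma add_mul_sq_mul_exp_neg_le {a b c : ℝ} (ha : 0 ≤ a) (hb : 0 ≤ b) (hc : 0 < c) (r : ℝ) :
    (a + b * r ^ 2) * exp (-c * r ^ 2) ≤ (a + b * (2 / c)) * exp (-(c / 2) * r ^ 2) := by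
  have hexp : exp (-c * r ^ 2) ≤ exp (-(c / 2) * r ^ 2) := by
    gcongr; linarith [sq_nonneg r]
  have := sq_mul_exp_neg_le hc r
  nlinarith [mul_le_mul_of_nonneg_left hexp ha, mul_le_mul_of_nonneg_left this hb]

lemma HasGaussianDecay.of_norm_le_quadratic_mul {f : E → F} {a b c : ℝ} (ha : 0 ≤ a) (hb : 0 ≤ b)
    (hc : 0 < c) (h : ∀ w, ‖f w‖ ≤ (a + b * ‖w‖ ^ 2) * exp (-c * ‖w‖ ^ 2)) :
    HasGaussianDecay f :=
  ⟨a + b * (2 / c), c / 2, by positivity,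
    fun w => (h w).trans (add_mul_sq_mul_exp_neg_le ha hb hc _)⟩

lemma HasGaussianDecay.of_norm_le_mul {f : E → F} {g : E → G} (hf : HasGaussianDecay f) (A : ℝ)
    (h : ∀ w, ‖g w‖ ≤ A * ‖f w‖) : HasGaussianDecay g := by
  obtain ⟨C, c, hc, hf⟩ := hf
  refine ⟨|A| * C, c, hc, fun w => (h w).trans ?_⟩
  calc A * ‖f w‖ ≤ |A| * ‖f w‖ := by gcongr; exact le_abs_self A
    _ ≤ |A| * C * exp (-c * ‖w‖ ^ 2) := by rw [mul_assoc]; gcongr; exact hf w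

lemma HasGaussianDecay.clm_apply [NormedSpace ℝ F] [NormedSpace ℝ G] {f : E → F →L[ℝ] G}
    (hf : HasGaussianDecay f) (v : F) : HasGaussianDecay (fun w => f w v) :=
  hf.of_norm_le_mul ‖v‖ fun w => ((f w).le_opNorm v).trans_eq (mul_comm _ _)

lemma exp_neg_mul_norm_sub_sq_le {c : ℝ} (hc : 0 ≤ c) {x x₀ : E} (hx : ‖x - x₀‖ ≤ 1) (y : E) :
    exp (-c * ‖x - y‖ ^ 2) ≤ exp c * exp (-(c / 2) * ‖x₀ - y‖ ^ 2) := by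
  have htriangle : ‖x₀ - y‖ ≤ 1 + ‖x - y‖ := by
    have := norm_sub_le_norm_sub_add_norm_sub x₀ x y
    rw [norm_sub_rev x₀ x] at this
    linarith
  have hsq : ‖x₀ - y‖ ^ 2 ≤ 2 + 2 * ‖x - y‖ ^ 2 := by
    nlinarith [norm_nonneg (x₀ - y), sq_nonneg (1 - ‖x - y‖)]
  rw [← exp_add, exp_le_exp]
  nlinarith

lemma HasGaussianDecay.exists_bound_sub {f : E → F} (hf : HasGaussianDecay f) (x₀ : E) :
    ∃ C c : ℝ, 0 < c ∧
      ∀ x ∈ Metric.ball x₀ 1, ∀ y, ‖f (x - y)‖ ≤ C * exp (-c * ‖x₀ - y‖ ^ 2) := by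
  obtain ⟨C, c, hc, hf⟩ := hf
  have hC : 0 ≤ C := by simpa using (norm_nonneg _).trans (hf 0)
  refine ⟨C * exp c, c / 2, by positivity, fun x hx y => (hf _).trans ?_⟩
  have hx' : ‖x - x₀‖ ≤ 1 := by rw [← dist_eq_norm]; exact (Metric.mem_ball.1 hx).le
  rw [mul_assoc]
  gcongr
  exact exp_neg_mul_norm_sub_sq_le hc.le hx' y

end GaussianDecay

section KernelConv

variable {E F : Type*} [NormedAddCommGroup E] [InnerProductSpace ℝ E] [FiniteDimensional ℝ E]
  [MeasurableSpace E] [BorelSpace E] [NormedAddCommGroup F] [NormedSpace ℝ F]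
  {z : E → ℝ} {M : ℝ}

noncomputable def kernelConv (K z : E → ℝ) (x : E) : ℝ :=
  ∫ y, K (x - y) * z y

lemma integrable_exp_neg_mul_norm_sub_sq {c : ℝ} (hc : 0 < c) (x₀ : E) :
    Integrable (fun y : E => exp (-c * ‖x₀ - y‖ ^ 2)) := by
  have hcexp := (GaussianFourier.integrable_cexp_neg_mul_sq_norm_add (V := E) (b := c)
    (by simpa using hc) 0 0).norm
  have hexp : Integrable (fun v : E => exp (-c * ‖v‖ ^ 2)) :=
    hcexp.congr (.of_forall fun v => by simp [Complex.norm_exp, ← Complex.ofReal_pow])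
  exact hexp.comp_sub_left x₀

lemma HasGaussianDecay.exists_integrable_bound_smul_sub {f : E → F} (hf : HasGaussianDecay f)
    (hzb : ∀ y, |z y| ≤ M) (x₀ : E) :
    ∃ bound : E → ℝ, Integrable bound ∧
      ∀ x ∈ Metric.ball x₀ 1, ∀ y, ‖z y • f (x - y)‖ ≤ bound y := by
  obtain ⟨C, c, hc, hbound⟩ := hf.exists_bound_sub x₀
  refine ⟨fun y => M * (C * exp (-c * ‖x₀ - y‖ ^ 2)),
    ((integrable_exp_neg_mul_norm_sub_sq hc x₀).const_mul C).const_mul M, fun x hx y => ?_⟩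
  rw [norm_smul, Real.norm_eq_abs]
  exact mul_le_mul (hzb y) (hbound x hx y) (norm_nonneg _) ((abs_nonneg _).trans (hzb y))

lemma HasGaussianDecay.integrable_smul_sub {f : E → F} (hf : HasGaussianDecay f)
    (hfc : Continuous f) (hz : AEStronglyMeasurable z) (hzb : ∀ y, |z y| ≤ M) (x : E) :
    Integrable (fun y => z y • f (x - y)) := by
  obtain ⟨bound, hint, hbound⟩ := hf.exists_integrable_bound_smul_sub hzb x
  exact hint.mono' (hz.smul (hfc.comp (continuous_sub_left x)).aestronglyMeasurable)
    (.of_forall (hbound x (Metric.mem_ball_self one_pos)))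

lemma HasGaussianDecay.integrable_mul_sub {K : E → ℝ} (hK : HasGaussianDecay K)
    (hKc : Continuous K) (hz : AEStronglyMeasurable z) (hzb : ∀ y, |z y| ≤ M) (x : E) :
    Integrable (fun y => K (x - y) * z y) := by
  simpa only [smul_eq_mul, mul_comm] using hK.integrable_smul_sub hKc hz hzb x

theorem hasFDerivAt_kernelConv {K : E → ℝ} (hK : ContDiff ℝ 1 K) (hK₀ : HasGaussianDecay K)
    (hK₁ : HasGaussianDecay (fderiv ℝ K)) (hz : AEStronglyMeasurable z) (hzb : ∀ y, |z y| ≤ M)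
    (x₀ : E) :
    HasFDerivAt (kernelConv K z) (∫ y, z y • fderiv ℝ K (x₀ - y)) x₀ := by
  obtain ⟨bound, hint, hbound⟩ := hK₁.exists_integrable_bound_smul_sub hzb x₀
  have hdiff : ∀ y x, HasFDerivAt (fun x => K (x - y) * z y) (z y • fderiv ℝ K (x - y)) x :=
    fun y x => by
      simpa using (((hK.differentiable one_ne_zero) (x - y)).hasFDerivAt.comp x
        ((hasFDerivAt_id x).sub_const y)).mul_const (z y)
  exact hasFDerivAt_integral_of_dominated_of_fderiv_le (F := fun x y => K (x - y) * z y)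
    (Metric.ball_mem_nhds x₀ one_pos)
    (.of_forall fun x => (hK.continuous.comp (continuous_sub_left x)).aestronglyMeasurable.mul hz)
    (hK₀.integrable_mul_sub hK.continuous hz hzb x₀)
    (hz.smul
      ((hK.continuous_fderiv one_ne_zero).comp (continuous_sub_left x₀)).aestronglyMeasurable)
    (.of_forall fun y x hx => hbound x hx y) hint (.of_forall fun y x _ => hdiff y x)

theorem fderiv_kernelConv_apply {K : E → ℝ} (hK : ContDiff ℝ 1 K) (hK₀ : HasGaussianDecay K)
    (hK₁ : HasGaussianDecay (fderiv ℝ K)) (hz : AEStronglyMeasurable z) (hzb : ∀ y, |z y| ≤ M)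
    (x v : E) :
    fderiv ℝ (kernelConv K z) x v = kernelConv (fun w => fderiv ℝ K w v) z x := by
  rw [(hasFDerivAt_kernelConv hK hK₀ hK₁ hz hzb x).fderiv, ContinuousLinearMap.integral_apply
    (hK₁.integrable_smul_sub (hK.continuous_fderiv one_ne_zero) hz hzb x)]
  simp only [kernelConv, FunLike.coe_smul, Pi.smul_apply, smul_eq_mul, mul_comm]

end KernelConv

lemma fderiv_fderiv_apply_const {E F : Type*} [NormedAddCommGroup E] [NormedSpace ℝ E]
    [NormedAddCommGroup F] [NormedSpace ℝ F] {K : E → F} {w : E}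
    (hK : DifferentiableAt ℝ (fderiv ℝ K) w) (v : E) :
    fderiv ℝ (fun w => fderiv ℝ K w v) w = (fderiv ℝ (fderiv ℝ K) w).flip v := by
  simp [fderiv_clm_apply hK (differentiableAt_const v)]

section Laplacian

variable {n : ℕ} {z : EuclideanSpace ℝ (Fin n) → ℝ} {M : ℝ}

theorem laplacian_kernelConv {K : EuclideanSpace ℝ (Fin n) → ℝ} (hK : ContDiff ℝ 2 K)
    (hK₀ : HasGaussianDecay K) (hK₁ : HasGaussianDecay (fderiv ℝ K))
    (hK₂ : HasGaussianDecay (fderiv ℝ (fderiv ℝ K))) (hz : AEStronglyMeasurable z)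
    (hzb : ∀ y, |z y| ≤ M) (x : EuclideanSpace ℝ (Fin n)) :
    laplacian n (kernelConv K z) x = kernelConv (laplacian n K) z x := by
  have hK_deriv : ContDiff ℝ 1 (fderiv ℝ K) := hK.fderiv_right (by norm_num)
  have hpartial : ∀ v, ContDiff ℝ 1 (fun w => fderiv ℝ K w v) := fun v =>
    hK_deriv.clm_apply contDiff_const
  have hpartial_deriv : ∀ v, HasGaussianDecay (fderiv ℝ fun w => fderiv ℝ K w v) := fun v =>
    hK₂.of_norm_le_mul ‖v‖ fun w => by
      rw [fderiv_fderiv_apply_const ((hK_deriv.differentiable one_ne_zero) w)]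
      exact ((fderiv ℝ (fderiv ℝ K) w).flip.le_opNorm v).trans_eq (by
        rw [ContinuousLinearMap.opNorm_flip, mul_comm])
  have hsecond : ∀ v y, fderiv ℝ (fun y => fderiv ℝ (kernelConv K z) y v) y v =
      kernelConv (fun w => fderiv ℝ (fun w => fderiv ℝ K w v) w v) z y := fun v y => by
    simp_rw [fderiv_kernelConv_apply (hK.of_le (by norm_num)) hK₀ hK₁ hz hzb]
    exact fderiv_kernelConv_apply (hpartial v) (hK₁.clm_apply v) (hpartial_deriv v) hz hzb y v
  simp only [laplacian, hsecond, kernelConv]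
  rw [← integral_finsetSum]
  · simp only [Finset.sum_mul]
  · intro i _
    exact ((hpartial_deriv _).clm_apply _).integrable_mul_sub
      (((hpartial _).continuous_fderiv one_ne_zero).clm_apply continuous_const) hz hzb x

end Laplacian

section GaussKernel

variable {n : ℕ} {t : ℝ}

local notation "ℝⁿ" => EuclideanSpace ℝ (Fin n)

lemma gaussKernel_eq (t : ℝ) (w : ℝⁿ) :
    gaussKernel n t w = (π * t) ^ (-(n : ℝ) / 2) * exp (-t⁻¹ * ‖w‖ ^ 2) := by
  unfold gaussKernel; congr 2; ring

lemma gaussKernel_nonneg (ht : 0 ≤ t) (w : ℝⁿ) : 0 ≤ gaussKernel n t w := by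
  rw [gaussKernel_eq]; positivity

lemma contDiff_gaussKernel (t : ℝ) {k : WithTop ℕ∞} : ContDiff ℝ k (gaussKernel n t) := by
  simp_rw [funext (gaussKernel_eq (n := n) t)]
  exact contDiff_const.mul ((contDiff_const.mul (contDiff_norm_sq ℝ)).exp)

lemma continuous_gaussKernel (t : ℝ) : Continuous (gaussKernel n t) :=
  (contDiff_gaussKernel t (k := 0)).continuous

lemma hasFDerivAt_gaussKernel (t : ℝ) (w : ℝⁿ) :
    HasFDerivAt (gaussKernel n t) ((-2 / t * gaussKernel n t w) • innerSL ℝ w) w := by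
  rw [funext (gaussKernel_eq (n := n) t)]
  refine ((((hasStrictFDerivAt_norm_sq w).hasFDerivAt.const_mul (-t⁻¹)).exp).const_mul
    ((π * t) ^ (-(n : ℝ) / 2))).congr_fderiv ?_
  ext v
  simp only [FunLike.coe_smul, Pi.smul_apply, smul_eq_mul]
  ring

lemma fderiv_gaussKernel (t : ℝ) :
    fderiv ℝ (gaussKernel n t) = fun w => (-2 / t * gaussKernel n t w) • innerSL ℝ w :=
  funext fun w => (hasFDerivAt_gaussKernel t w).fderiv

lemma hasFDerivAt_fderiv_gaussKernel_apply (t : ℝ) (v w : ℝⁿ) :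
    HasFDerivAt (fun w => fderiv ℝ (gaussKernel n t) w v)
      ((-2 / t * gaussKernel n t w) • innerSL ℝ v +
        inner ℝ w v • (-2 / t) • (-2 / t * gaussKernel n t w) • innerSL ℝ w) w := by
  have hinner : HasFDerivAt (fun w : ℝⁿ => inner ℝ w v) (innerSL ℝ v) w :=
    (innerSL ℝ v).hasFDerivAt.congr_of_eventuallyEq
      (.of_forall fun u => real_inner_comm v u)
  simp only [fderiv_gaussKernel, FunLike.coe_smul, Pi.smul_apply, innerSL_apply_apply, smul_eq_mul]
  exact ((hasFDerivAt_gaussKernel t w).const_mul (-2 / t)).mul hinner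

lemma fderiv_fderiv_gaussKernel_apply (t : ℝ) (w v : ℝⁿ) :
    (fderiv ℝ (fderiv ℝ (gaussKernel n t)) w).flip v =
      (-2 / t * gaussKernel n t w) • innerSL ℝ v +
        inner ℝ w v • (-2 / t) • (-2 / t * gaussKernel n t w) • innerSL ℝ w := by
  rw [← fderiv_fderiv_apply_const, (hasFDerivAt_fderiv_gaussKernel_apply t v w).fderiv]
  exact ((contDiff_gaussKernel t (k := 2)).fderiv_right (m := 1) le_rfl).differentiable
    one_ne_zero w

lemma laplacian_gaussKernel (t : ℝ) (w : ℝⁿ) :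
    laplacian n (gaussKernel n t) w = (4 * ‖w‖ ^ 2 / t ^ 2 - 2 * n / t) * gaussKernel n t w := by
  simp only [laplacian, fun v => (hasFDerivAt_fderiv_gaussKernel_apply t v w).fderiv]
  simp only [EuclideanSpace.inner_single_right, ringHom_apply, one_mul, add_apply, smul_apply,
    coe_innerSL_apply, inner_self_eq_norm_sq_to_K, PiLp.norm_single, norm_one, one_pow, smul_eq_mul,
    mul_one]
  rw [Finset.sum_add_distrib, Finset.sum_const, Finset.card_univ, Fintype.card_fin, nsmul_eq_mul,
    EuclideanSpace.norm_sq_eq]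
  have hterm : ∀ i, w i * (-2 / t * (-2 / t * gaussKernel n t w * w i)) =
      4 / t ^ 2 * gaussKernel n t w * w i ^ 2 := fun i => by ring
  simp only [Real.norm_eq_abs, sq_abs, hterm, ← Finset.mul_sum]
  ring

lemma norm_neg_two_div_mul_gaussKernel (ht : 0 < t) (w : ℝⁿ) :
    ‖-2 / t * gaussKernel n t w‖ = 2 / t * gaussKernel n t w := by
  rw [norm_mul, neg_div, norm_neg, Real.norm_of_nonneg (by positivity),
    Real.norm_of_nonneg (gaussKernel_nonneg ht.le w)]

lemma HasGaussianDecay.of_norm_le_quadratic_mul_gaussKernel {F : Type*} [NormedAddCommGroup F]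
    {f : ℝⁿ → F} {a b : ℝ} (ht : 0 < t) (ha : 0 ≤ a) (hb : 0 ≤ b)
    (h : ∀ w, ‖f w‖ ≤ (a + b * ‖w‖ ^ 2) * gaussKernel n t w) : HasGaussianDecay f := by
  have hA : 0 ≤ (π * t) ^ (-(n : ℝ) / 2) := by positivity
  refine .of_norm_le_quadratic_mul (mul_nonneg hA ha) (mul_nonneg hA hb) (inv_pos.2 ht)
    fun w => (h w).trans_eq ?_
  rw [gaussKernel_eq]
  ring

lemma hasGaussianDecay_gaussKernel (ht : 0 < t) : HasGaussianDecay (gaussKernel n t) :=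
  .of_norm_le_quadratic_mul_gaussKernel ht zero_le_one le_rfl fun w => by
    rw [Real.norm_of_nonneg (gaussKernel_nonneg ht.le w)]
    simp

lemma hasGaussianDecay_fderiv_gaussKernel (ht : 0 < t) :
    HasGaussianDecay (fderiv ℝ (gaussKernel n t)) := by
  refine .of_norm_le_quadratic_mul_gaussKernel ht (a := 2 / t) (b := 2 / t) (by positivity)
    (by positivity) fun w => ?_
  have hw : ‖w‖ ≤ 1 + ‖w‖ ^ 2 := by nlinarith [sq_nonneg (‖w‖ - 1)]
  have hG := gaussKernel_nonneg (n := n) ht.le w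
  rw [fderiv_gaussKernel, norm_smul, innerSL_apply_norm, norm_neg_two_div_mul_gaussKernel ht]
  calc 2 / t * gaussKernel n t w * ‖w‖ ≤ 2 / t * gaussKernel n t w * (1 + ‖w‖ ^ 2) := by gcongr
    _ = (2 / t + 2 / t * ‖w‖ ^ 2) * gaussKernel n t w := by ring

lemma hasGaussianDecay_fderiv_fderiv_gaussKernel (ht : 0 < t) :
    HasGaussianDecay (fderiv ℝ (fderiv ℝ (gaussKernel n t))) := by
  refine .of_norm_le_quadratic_mul_gaussKernel ht (a := 2 / t) (b := 4 / t ^ 2) (by positivity)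
    (by positivity) fun w => ?_
  have hG := gaussKernel_nonneg (n := n) ht.le w
  rw [← ContinuousLinearMap.opNorm_flip]
  refine ContinuousLinearMap.opNorm_le_bound _ (by positivity) fun v => ?_
  rw [fderiv_fderiv_gaussKernel_apply]
  refine le_trans (norm_add_le _ _) ?_
  rw [norm_smul, norm_smul, norm_smul, norm_smul, innerSL_apply_norm, innerSL_apply_norm,
    norm_neg_two_div_mul_gaussKernel ht, neg_div, norm_neg,
    Real.norm_of_nonneg (by positivity : (0 : ℝ) ≤ 2 / t)]
  calc _ ≤ 2 / t * gaussKernel n t w * ‖v‖ +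
        ‖w‖ * ‖v‖ * (2 / t * (2 / t * gaussKernel n t w * ‖w‖)) := by
        gcongr; exact norm_inner_le_norm w v
    _ = (2 / t + 4 / t ^ 2 * ‖w‖ ^ 2) * gaussKernel n t w * ‖v‖ := by ring

theorem gaussKernel_heat_equation (ht : 0 < t) (w : ℝⁿ) :
    HasDerivAt (fun s => gaussKernel n s w) (1 / 4 * laplacian n (gaussKernel n t) w) t := by
  have hprefactor : HasDerivAt (fun s => (π * s) ^ (-(n : ℝ) / 2))
      (π * (-(n : ℝ) / 2) * (π * t) ^ (-(n : ℝ) / 2 - 1)) t :=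
    ((hasDerivAt_id t).const_mul π).rpow_const (Or.inl (by positivity)) |>.congr_deriv (by simp)
  have hexp : HasDerivAt (fun s => exp (-s⁻¹ * ‖w‖ ^ 2))
      (exp (-t⁻¹ * ‖w‖ ^ 2) * (-(-(t ^ 2)⁻¹) * ‖w‖ ^ 2)) t :=
    ((hasDerivAt_inv ht.ne').neg.mul_const _).exp
  rw [laplacian_gaussKernel, funext fun s => gaussKernel_eq (n := n) s w]
  refine (hprefactor.mul hexp).congr_deriv ?_
  rw [rpow_sub_one (by positivity), gaussKernel_eq]
  field_simp
  ring

lemma exists_bound_laplacian_gaussKernel (ht : 0 < t) :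
    ∃ C c : ℝ, 0 < c ∧ ∀ s ∈ Set.Icc (t / 2) (2 * t), ∀ w : ℝⁿ,
      |laplacian n (gaussKernel n s) w| ≤ C * exp (-c * ‖w‖ ^ 2) := by
  set A := (π * (t / 2)) ^ (-(n : ℝ) / 2)
  refine ⟨A * (4 * n / t + 16 / t ^ 2 * (2 / (2 * t)⁻¹)), (2 * t)⁻¹ / 2, by positivity,
    fun s ⟨hs₁, hs₂⟩ w => ?_⟩
  have hs : 0 < s := by linarith
  have hcoeff : |4 * ‖w‖ ^ 2 / s ^ 2 - 2 * n / s| ≤ 4 * n / t + 16 / t ^ 2 * ‖w‖ ^ 2 :=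
    calc |4 * ‖w‖ ^ 2 / s ^ 2 - 2 * n / s|
        ≤ 4 * ‖w‖ ^ 2 / s ^ 2 + 2 * n / s := by
          refine (abs_sub _ _).trans_eq ?_
          rw [abs_of_nonneg (by positivity), abs_of_nonneg (by positivity)]
      _ ≤ 4 * ‖w‖ ^ 2 / (t / 2) ^ 2 + 2 * n / (t / 2) := by gcongr
      _ = 4 * n / t + 16 / t ^ 2 * ‖w‖ ^ 2 := by field_simp; ring
  have hkernel : gaussKernel n s w ≤ A * exp (-(2 * t)⁻¹ * ‖w‖ ^ 2) := by
    rw [gaussKernel_eq]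
    gcongr
    exact rpow_le_rpow_of_nonpos (by positivity) (by gcongr) (by linarith [n.cast_nonneg (α := ℝ)])
  rw [laplacian_gaussKernel, abs_mul, abs_of_nonneg (gaussKernel_nonneg hs.le w)]
  calc _ ≤ (4 * n / t + 16 / t ^ 2 * ‖w‖ ^ 2) * (A * exp (-(2 * t)⁻¹ * ‖w‖ ^ 2)) :=
        mul_le_mul hcoeff hkernel (gaussKernel_nonneg hs.le w) (by positivity)
    _ = A * ((4 * n / t + 16 / t ^ 2 * ‖w‖ ^ 2) * exp (-(2 * t)⁻¹ * ‖w‖ ^ 2)) := by ring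
    _ ≤ _ := by
        rw [mul_assoc]
        exact mul_le_mul_of_nonneg_left
          (add_mul_sq_mul_exp_neg_le (by positivity) (by positivity) (by positivity) _)
          (by positivity)

end GaussKernel

section ScaleSpace

variable {n : ℕ} {t M : ℝ} {z : EuclideanSpace ℝ (Fin n) → ℝ}

lemma continuous_laplacian_gaussKernel (t : ℝ) : Continuous (laplacian n (gaussKernel n t)) := by
  have hG := continuous_gaussKernel (n := n) t
  simp_rw [funext (laplacian_gaussKernel (n := n) t)]
  fun_prop

theorem hasDerivAt_gaussBlur_scale (ht : 0 < t) (hz : AEStronglyMeasurable z)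
    (hzb : ∀ y, |z y| ≤ M) (x : EuclideanSpace ℝ (Fin n)) :
    HasDerivAt (fun s => gaussBlur n s z x)
      (kernelConv (fun w => 1 / 4 * laplacian n (gaussKernel n t) w) z x) t := by
  obtain ⟨C, c, hc, hbound⟩ := exists_bound_laplacian_gaussKernel (n := n) ht
  have hnhds : Set.Icc (t / 2) (2 * t) ∈ nhds t := Icc_mem_nhds (by linarith) (by linarith)
  refine (hasDerivAt_integral_of_dominated_loc_of_deriv_le (𝕜 := ℝ) hnhds
    (F := fun s y => gaussKernel n s (x - y) * z y)
    (F' := fun s y => 1 / 4 * laplacian n (gaussKernel n s) (x - y) * z y)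
    (bound := fun y => 1 / 4 * (C * exp (-c * ‖x - y‖ ^ 2)) * M)
    (.of_forall fun s =>
      ((continuous_gaussKernel s).comp (continuous_sub_left x)).aestronglyMeasurable.mul hz)
    ((hasGaussianDecay_gaussKernel ht).integrable_mul_sub (continuous_gaussKernel t) hz hzb x)
    ((((continuous_laplacian_gaussKernel t).comp (continuous_sub_left x)).const_mul _
      ).aestronglyMeasurable.mul hz)
    (.of_forall fun y s hs => ?_)
    (((integrable_exp_neg_mul_norm_sub_sq hc x).const_mul C).const_mul _ |>.mul_const M)
    (.of_forall fun y s hs =>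
      (gaussKernel_heat_equation (by linarith [hs.1]) (x - y)).mul_const (z y))).2
  have hL := hbound s hs (x - y)
  rw [norm_mul, norm_mul, Real.norm_eq_abs, Real.norm_eq_abs, Real.norm_eq_abs,
    abs_of_pos (by norm_num : (0 : ℝ) < 1 / 4)]
  gcongr
  · exact mul_nonneg (by norm_num) ((abs_nonneg _).trans hL)
  · exact hzb y

end ScaleSpace

/-- The Gaussian scale space solves the diffusion (heat) equation
`∂u/∂t(t,x) = (1/4)·Δ_x u(t,x)` for bounded continuous signals. -/
theorem gaussian_scale_space_heat_equation (n : ℕ)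
    (z : EuclideanSpace ℝ (Fin n) → ℝ)
    (hz : Continuous z) (hb : ∃ C : ℝ, ∀ x, |z x| ≤ C)
    (t : ℝ) (ht : 0 < t) (x : EuclideanSpace ℝ (Fin n)) :
    HasDerivAt (fun s => gaussBlur n s z x)
      ((1 / 4) * laplacian n (gaussBlur n t z) x) t := by
  obtain ⟨M, hM⟩ := hb
  -- `gaussBlur n t z` is `kernelConv (gaussKernel n t) z` by definition.
  have hlaplacian : laplacian n (gaussBlur n t z) x =
      kernelConv (laplacian n (gaussKernel n t)) z x :=
    laplacian_kernelConv (contDiff_gaussKernel t) (hasGaussianDecay_gaussKernel ht)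
      (hasGaussianDecay_fderiv_gaussKernel ht) (hasGaussianDecay_fderiv_fderiv_gaussKernel ht)
      hz.aestronglyMeasurable hM x
  rw [hlaplacian, kernelConv, ← integral_const_mul]
  simpa only [kernelConv, mul_assoc] using
    hasDerivAt_gaussBlur_scale ht hz.aestronglyMeasurable hM x
end

section
/- Intensity scaling enhances positive minima, violating the strong causality axiom: for the input z(x) = x² + 1 and the intensity-scaling path L(x, α) = α·(x² + 1), for every α ∈ (0, 1] the point x = 0 is the unique local minimum of x ↦ L(x, α), and the minimum value L(0, α) = α is strictly increasing in α; hence as the scale parameter increases (α decreases from 1 to 0), the value at the local minimum strictly decreases, i.e. the minimum is enhanced. -/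
/-- Intensity scaling enhances positive minima, violating the strong causality
axiom: for the input `z(x) = x² + 1` and the intensity-scaling path
`L(x, α) = α·(x² + 1)`, for every `α ∈ (0, 1]` the point `x = 0` is the unique
local minimum of `x ↦ L(x, α)`, and the minimum value `L(0, α) = α` is strictly
increasing in `α`: as the scale parameter increases (`α` decreases from 1 to 0)
the value at the local minimum strictly decreases, i.e. the minimum is enhanced. -/
theorem intensity_scaling_enhances_minima :
    (∀ α : ℝ, α ∈ Set.Ioc (0 : ℝ) 1 →
        IsLocalMin (fun x : ℝ => α * (x ^ 2 + 1)) 0 ∧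
        (∀ x : ℝ, IsLocalMin (fun x : ℝ => α * (x ^ 2 + 1)) x → x = 0)) ∧
    (∀ α : ℝ, α ∈ Set.Ioc (0 : ℝ) 1 → α * ((0 : ℝ) ^ 2 + 1) = α) ∧
    StrictMonoOn (fun α : ℝ => α * ((0 : ℝ) ^ 2 + 1)) (Set.Ioc (0 : ℝ) 1) := by
  refine ⟨fun α hα => ⟨?_, ?_⟩, fun α hα => by norm_num, ?_⟩
  · -- global min, hence local min
    apply IsMinOn.isLocalMin (s := Set.univ)
    · intro y _
      have hsq : (0:ℝ) ≤ y^2 := sq_nonneg y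
      have := hα.1
      simp only [Set.mem_setOf_eq]
      nlinarith
    · exact Filter.univ_mem
  · intro x hx
    by_contra hne
    rcases Metric.eventually_nhds_iff.mp hx with ⟨ε, hε, hball⟩
    set δ := min ε |x| / 2 with hδ
    have hδpos : 0 < δ := by
      have : 0 < |x| := abs_pos.mpr hne
      have : 0 < min ε |x| := lt_min hε this
      positivity
    have hδε : δ < ε := by
      have : min ε |x| ≤ ε := min_le_left _ _
      linarith
    have hδx : δ < |x| := by
      have : min ε |x| ≤ |x| := min_le_right _ _
      have : 0 < |x| := abs_pos.mpr hne
      have h1 : min ε |x| ≤ |x| := min_le_right _ _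
      linarith
    rcases lt_or_gt_of_ne hne with hneg | hpos
    · -- x < 0, take y = x + δ
      have hxabs : |x| = -x := abs_of_neg hneg
      have hy : dist (x + δ) x < ε := by
        simp [Real.dist_eq, abs_of_pos hδpos]; linarith
      have hb := hball hy
      simp only at hb
      have hy2 : (x + δ)^2 < x^2 := by nlinarith [hδx, hxabs]
      nlinarith [hα.1]
    · have hxabs : |x| = x := abs_of_pos hpos
      have hy : dist (x - δ) x < ε := by
        rw [Real.dist_eq, show x - δ - x = -δ by ring, abs_neg, abs_of_pos hδpos]
        linarith
      have hb := hball hy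
      simp only at hb
      have hy2 : (x - δ)^2 < x^2 := by nlinarith [hδx, hxabs]
      nlinarith [hα.1]
  · intro a _ b _ hab
    simp only
    norm_num
    exact hab
end

section
/- Intensity scaling with a random (non-black) baseline can create new extrema: for the input z(x) = x² + 1 and the baseline z'(x) = 10·cos(x), the intermediate path point at α = 1/2, namely L(x) = (1 − 1/2)·z'(x) + (1/2)·z(x) = 5·cos(x) + (x² + 1)/2, has a local maximum at x = 0 (indeed L'(0) = 0 and L''(0) = −4 < 0), whereas the input z(x) = x² + 1 has no local maximum anywhere on ℝ. -/
/-!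
The path point `L = 5 cos x + (x² + 1)/2` has `L' = x - 5 sin x` and `L'' = 1 - 5 cos x`, so
`L'(0) = 0` and `L''(0) = -4`, and the second-derivative test gives the local maximum at `0`.
The input `x² + 1` is strictly convex, and a strictly convex function has no local maximum:
at any point its value lies strictly below the average of its values at two nearby points
placed symmetrically around it.
-/

open Filter Topology Real

theorem StrictConvexOn.not_isLocalMax {E : Type*} [NormedAddCommGroup E] [NormedSpace ℝ E]
    [Nontrivial E] {s : Set E} {f : E → ℝ} {x : E} (hf : StrictConvexOn ℝ s f) (hs : s ∈ 𝓝 x) :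
    ¬IsLocalMax f x := by
  intro hmax
  obtain ⟨v, hv⟩ := exists_ne (0 : E)
  have hs' : ∀ᶠ y in 𝓝 x, y ∈ s := hs
  have hnear : ∀ᶠ y in 𝓝 x, y ∈ s ∧ f y ≤ f x := hs'.and hmax
  have hline (c : ℝ) : Tendsto (fun t : ℝ => x + (c * t) • v) (𝓝 0) (𝓝 x) := by
    simpa using (by fun_prop : Continuous fun t : ℝ => x + (c * t) • v).tendsto 0
  have hpunct : ∀ᶠ t in 𝓝[≠] (0 : ℝ), t ≠ 0 := self_mem_nhdsWithin
  obtain ⟨t, ht, ⟨hs₁, hle₁⟩, hs₂, hle₂⟩ := (hpunct.and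
    (((hline 1).eventually hnear).and ((hline (-1)).eventually hnear)
      |>.filter_mono nhdsWithin_le_nhds)).exists
  have hne : x + (1 * t) • v ≠ x + (-1 * t) • v := by
    rw [Ne, add_right_inj, ← sub_eq_zero, ← sub_smul]
    exact smul_ne_zero (fun h => ht (by linarith)) hv
  have hmid := hf.2 hs₁ hs₂ hne (by norm_num : (0 : ℝ) < 1 / 2) (by norm_num : (0 : ℝ) < 1 / 2)
    (by norm_num)
  rw [show (1 / 2 : ℝ) • (x + (1 * t) • v) + (1 / 2 : ℝ) • (x + (-1 * t) • v) = x by module]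
    at hmid
  simp only [smul_eq_mul] at hmid
  linarith

theorem not_isLocalMax_sq_add_one (x : ℝ) : ¬IsLocalMax (fun x : ℝ => x ^ 2 + 1) x :=
  ((Even.strictConvexOn_pow even_two two_ne_zero).add_const 1).not_isLocalMax univ_mem

theorem hasDerivAt_cos_path (x : ℝ) :
    HasDerivAt (fun x : ℝ => 5 * cos x + (x ^ 2 + 1) / 2) (x - 5 * sin x) x :=
  (((hasDerivAt_cos x).const_mul 5).fun_add
    (((hasDerivAt_pow 2 x).add_const 1).div_const 2)).congr_deriv (by ring)

theorem deriv_cos_path :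
    deriv (fun x : ℝ => 5 * cos x + (x ^ 2 + 1) / 2) = fun x => x - 5 * sin x :=
  funext fun x => (hasDerivAt_cos_path x).deriv

theorem hasDerivAt_deriv_cos_path (x : ℝ) :
    HasDerivAt (fun x : ℝ => x - 5 * sin x) (1 - 5 * cos x) x :=
  (hasDerivAt_id x).sub ((hasDerivAt_sin x).const_mul 5)

theorem deriv_cos_path_zero : deriv (fun x : ℝ => 5 * cos x + (x ^ 2 + 1) / 2) 0 = 0 := by
  simp [deriv_cos_path]

theorem deriv_deriv_cos_path_zero :
    deriv (deriv (fun x : ℝ => 5 * cos x + (x ^ 2 + 1) / 2)) 0 = -4 := by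
  rw [deriv_cos_path, (hasDerivAt_deriv_cos_path 0).deriv]
  norm_num

/-- Intensity scaling with a random (non-black) baseline can create new extrema:
for the input `z(x) = x² + 1` and baseline `z'(x) = 10·cos(x)`, the intermediate
path point at `α = 1/2`, namely `L(x) = (1 − 1/2)·z'(x) + (1/2)·z(x)
= 5·cos(x) + (x² + 1)/2`, has a local maximum at `x = 0` (with `L'(0) = 0` and
`L''(0) = −4 < 0`), whereas the input `z(x) = x² + 1` has no local maximum
anywhere on `ℝ`. -/
theorem intensity_scaling_random_baseline_creates_extrema :
    (∀ x : ℝ, (1 - 1 / 2) * (10 * Real.cos x) + (1 / 2) * (x ^ 2 + 1)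
        = 5 * Real.cos x + (x ^ 2 + 1) / 2) ∧
    IsLocalMax (fun x : ℝ => 5 * Real.cos x + (x ^ 2 + 1) / 2) 0 ∧
    deriv (fun x : ℝ => 5 * Real.cos x + (x ^ 2 + 1) / 2) 0 = 0 ∧
    deriv (deriv (fun x : ℝ => 5 * Real.cos x + (x ^ 2 + 1) / 2)) 0 = -4 ∧
    (-4 : ℝ) < 0 ∧
    (∀ x : ℝ, ¬ IsLocalMax (fun x : ℝ => x ^ 2 + 1) x) := by
  have hmax : IsLocalMax (fun x : ℝ => 5 * cos x + (x ^ 2 + 1) / 2) 0 :=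
    isLocalMax_of_deriv_deriv_neg (by rw [deriv_deriv_cos_path_zero]; norm_num)
      deriv_cos_path_zero (hasDerivAt_cos_path 0).continuousAt
  exact ⟨fun x => by ring, hmax, deriv_cos_path_zero, deriv_deriv_cos_path_zero, by norm_num,
    not_isLocalMax_sq_add_one⟩
end
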